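/- The boundary word of a half-plane graph is (+,-)-Yamanouchi: in every prefix, the number of '-' symbols does not exceed the number of '+' symbols. -/
import Mathlib


/-- Symbols appearing in the boundary word of a half-plane graph. -/
inductive BSym
  | plus
  | zero
  | minus
deriving DecidableEq

/-- A half-plane graph, abstracted by the data that determines its boundary
word: the depths (distances to the unbounded face in the planar dual) of the
`n+1` faces touching the x-axis, listed from left to right.  The first and
last of these faces are the unbounded face, of depth `0`, and depths of
consecutive boundary faces (which share the single edge incident to a
boundary vertex) differ by at most one. -/
structure HalfPlaneGraph (n : ℕ) where
  faceDepth : Fin (n + 1) → ℕ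
  first_eq : faceDepth 0 = 0
  last_eq : faceDepth (Fin.last n) = 0
  step : ∀ i : Fin n,
    faceDepth i.castSucc = faceDepth i.succ ∨
    faceDepth i.castSucc + 1 = faceDepth i.succ ∨
    faceDepth i.castSucc = faceDepth i.succ + 1

/-- The boundary word of a half-plane graph: the `i`-th symbol is `+`, `0`
or `-` according to whether the depth immediately to the left of boundary
vertex `i` is smaller than, equal to, or larger than the depth immediately
to its right. -/
def boundaryWord {n : ℕ} (G : HalfPlaneGraph n) (i : Fin n) : BSym :=
  if G.faceDepth i.castSucc < G.faceDepth i.succ then BSym.plus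
  else if G.faceDepth i.castSucc = G.faceDepth i.succ then BSym.zero
  else BSym.minus

lemma count_succ {n : ℕ} (q : Fin n → Prop) [DecidablePred q] (k : ℕ) (hk : k < n) :
    (Finset.univ.filter (fun i : Fin n => (i : ℕ) < k + 1 ∧ q i)).card =
    (Finset.univ.filter (fun i : Fin n => (i : ℕ) < k ∧ q i)).card +
      (if q ⟨k, hk⟩ then 1 else 0) := by
  classical
  rw [Finset.card_filter, Finset.card_filter,
    show (if q ⟨k, hk⟩ then 1 else 0) =
      ∑ i : Fin n, if i = ⟨k, hk⟩ ∧ q i then 1 else 0 by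
        simp [ite_and], ← Finset.sum_add_distrib]
  apply Finset.sum_congr rfl
  intro i _
  by_cases h1 : q i
  · by_cases h2 : (i : ℕ) = k
    · have : i = ⟨k, hk⟩ := Fin.ext h2
      subst this
      simp [h1]
    · have hne : i ≠ ⟨k, hk⟩ := fun h => h2 (by rw [h])
      simp only [h1, and_true, hne, false_and, if_false]
      split <;> split <;> omega
  · simp [h1]

lemma count_succ' {n : ℕ} (G : HalfPlaneGraph n) (s : BSym) (k : ℕ) (hk : k < n) :
    (Finset.univ.filter (fun i : Fin n => (i : ℕ) < k + 1 ∧ boundaryWord G i = s)).card =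
    (Finset.univ.filter (fun i : Fin n => (i : ℕ) < k ∧ boundaryWord G i = s)).card +
      (if boundaryWord G ⟨k, hk⟩ = s then 1 else 0) :=
  count_succ (fun i => boundaryWord G i = s) k hk

lemma key {n : ℕ} (G : HalfPlaneGraph n) :
    ∀ k (hk : k ≤ n),
      G.faceDepth ⟨k, Nat.lt_succ_of_le hk⟩ +
        (Finset.univ.filter
          (fun i : Fin n => (i : ℕ) < k ∧ boundaryWord G i = BSym.minus)).card =
      (Finset.univ.filter
        (fun i : Fin n => (i : ℕ) < k ∧ boundaryWord G i = BSym.plus)).card := by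
  intro k
  induction k with
  | zero =>
    intro hk
    have h0 : (⟨0, Nat.lt_succ_of_le hk⟩ : Fin (n+1)) = 0 := rfl
    simp [h0, G.first_eq]
  | succ k ih =>
    intro hk
    have hkn : k < n := hk
    have hk' : k ≤ n := le_of_lt hkn
    rw [count_succ' G BSym.minus k hkn, count_succ' G BSym.plus k hkn]
    have hcs : (⟨k, hkn⟩ : Fin n).castSucc = ⟨k, Nat.lt_succ_of_le hk'⟩ := rfl
    have hsc : (⟨k, hkn⟩ : Fin n).succ = ⟨k + 1, Nat.lt_succ_of_le hk⟩ := rfl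
    have ihk := ih hk'
    rcases G.step ⟨k, hkn⟩ with h | h | h <;> rw [hcs, hsc] at h
    · have hbw : boundaryWord G ⟨k, hkn⟩ = BSym.zero := by
        simp [boundaryWord, hcs, hsc, h]
      simp only [hbw]
      simp only [reduceCtorEq, if_false]
      omega
    · have hbw : boundaryWord G ⟨k, hkn⟩ = BSym.plus := by
        simp only [boundaryWord, hcs, hsc, ← h]
        simp
      simp only [hbw]
      simp only [reduceCtorEq, if_false, if_true]
      omega
    · have hbw : boundaryWord G ⟨k, hkn⟩ = BSym.minus := by
        simp only [boundaryWord, hcs, hsc, h]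
        simp
      simp only [hbw]
      simp only [reduceCtorEq, if_false, if_true]
      omega

/-- The boundary word of a half-plane graph is `(+,-)`-Yamanouchi: in every
prefix, the number of `-` symbols does not exceed the number of `+` symbols. -/
theorem boundaryWord_yamanouchi {n : ℕ} (G : HalfPlaneGraph n) :
    ∀ k : ℕ,
      (Finset.univ.filter
        (fun i : Fin n => (i : ℕ) < k ∧ boundaryWord G i = BSym.minus)).card ≤
      (Finset.univ.filter
        (fun i : Fin n => (i : ℕ) < k ∧ boundaryWord G i = BSym.plus)).card := by
  intro k
  rcases le_or_gt k n with hk | hk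
  · have := key G k hk
    omega
  · have heq : ∀ s : BSym,
        Finset.univ.filter (fun i : Fin n => (i : ℕ) < k ∧ boundaryWord G i = s) =
        Finset.univ.filter (fun i : Fin n => (i : ℕ) < n ∧ boundaryWord G i = s) := by
      intro s
      apply Finset.filter_congr
      intro i _
      have h1 : (i : ℕ) < k := lt_trans i.isLt hk
      simp [h1, i.isLt]
    rw [heq BSym.minus, heq BSym.plus]
    have := key G n le_rfl
    omega
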